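/- Let B ∈ ℝ^{n×n} be symmetric positive definite, let x, x' ∈ ℝⁿ with s := x' − x ≠ 0, let λ ∈ Δ_m, and set y := Σ_{i=1}^m λ_i (∇f_i(x') − ∇f_i(x)). Suppose Σ_{i=1}^m λ_i (f_i(x) − f_i(x')) > 0, and define η := yᵀs/‖s‖², m̂ := max(−η, 0) + Σ_{i=1}^m λ_i (f_i(x) − f_i(x')), and γ := y + m̂ s. Then γᵀs ≥ (Σ_{i=1}^m λ_i (f_i(x) − f_i(x'))) · ‖s‖² > 0, and the BFGS-type update B⁺ = B − (B s sᵀ B)/(sᵀ B s) + (γ γᵀ)/(γᵀ s) is symmetric positive definite. -/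

import Mathlib

open RealInnerProductSpace

noncomputable section

abbrev E (n : ℕ) := EuclideanSpace ℝ (Fin n)

def quad {n : ℕ} (B : Matrix (Fin n) (Fin n) ℝ) (d : E n) : ℝ :=
  ∑ i, ∑ j, d i * B i j * d j

def outer {n : ℕ} (u v : E n) : Matrix (Fin n) (Fin n) ℝ :=
  Matrix.of fun i j => u i * v j

def bfgsUpdate {n : ℕ} (B : Matrix (Fin n) (Fin n) ℝ) (s γ : E n) :
    Matrix (Fin n) (Fin n) ℝ :=
  B - (quad B s)⁻¹ • (B * outer s s * B) + (⟪γ, s⟫)⁻¹ • outer γ γ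

/-!
The curvature bound is pure algebra: with `η = yᵀs / ‖s‖²` one has `yᵀs = η ‖s‖²`, and the
shift `max(-η, 0) s` raises this to `max(η, 0) ‖s‖² ≥ 0`, after which the extra term `c s`
contributes `c ‖s‖²`. For the update, write `d = w + t s` with `w` the component of `d` that is
`B`-orthogonal to `s`; the quadratic form of `B⁺` at `d` is then `wᵀBw + (γᵀd)² / γᵀs`. The first
term is positive unless `w = 0`, and then `d` is a nonzero multiple of `s`, so `γᵀd ≠ 0` because
`γᵀs > 0`.
-/

open Matrix

lemma mul_norm_sq_le_inner_add_max_smul {F : Type*} [NormedAddCommGroup F] [InnerProductSpace ℝ F]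
    (y s : F) (c : ℝ) :
    c * ‖s‖ ^ 2 ≤ ⟪y + (max (-(⟪y, s⟫ / ‖s‖ ^ 2)) 0 + c) • s, s⟫ := by
  set η := ⟪y, s⟫ / ‖s‖ ^ 2
  have hys : ⟪y, s⟫ = η * ‖s‖ ^ 2 :=
    (div_mul_cancel_of_imp fun h => by simp_all).symm
  have hη : 0 ≤ η + max (-η) 0 := by linarith [le_max_left (-η) 0]
  rw [inner_add_left, real_inner_smul_left, real_inner_self_eq_norm_sq, hys]
  nlinarith [mul_nonneg hη (sq_nonneg ‖s‖)]

namespace Matrix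

variable {ι : Type*} [Fintype ι]

lemma dotProduct_vecMulVec_self_mulVec (u d : ι → ℝ) :
    d ⬝ᵥ vecMulVec u u *ᵥ d = (u ⬝ᵥ d) ^ 2 := by
  rw [vecMulVec_mulVec, op_smul_eq_smul, dotProduct_smul, smul_eq_mul, dotProduct_comm d u, sq]

lemma isHermitian_vecMulVec_self (u : ι → ℝ) : (vecMulVec u u).IsHermitian := by
  simpa using (posSemidef_vecMulVec_self_star u).1

lemma IsHermitian.dotProduct_mulVec_comm {B : Matrix ι ι ℝ} (hB : B.IsHermitian) (u v : ι → ℝ) :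
    u ⬝ᵥ B *ᵥ v = v ⬝ᵥ B *ᵥ u := by
  rw [dotProduct_mulVec, ← mulVec_transpose, ← conjTranspose_eq_transpose_of_trivial, hB.eq,
    dotProduct_comm]

lemma IsHermitian.dotProduct_mulVec_sub_smul {B : Matrix ι ι ℝ} (hB : B.IsHermitian)
    (d s : ι → ℝ) (t : ℝ) :
    (d - t • s) ⬝ᵥ B *ᵥ (d - t • s) =
      d ⬝ᵥ B *ᵥ d - 2 * t * ((B *ᵥ s) ⬝ᵥ d) + t ^ 2 * (s ⬝ᵥ B *ᵥ s) := by
  have hsd : s ⬝ᵥ B *ᵥ d = (B *ᵥ s) ⬝ᵥ d := by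
    rw [hB.dotProduct_mulVec_comm, dotProduct_comm]
  simp only [mulVec_sub, mulVec_smul, sub_dotProduct, dotProduct_sub, smul_dotProduct,
    dotProduct_smul, smul_eq_mul, hsd, dotProduct_comm d (B *ᵥ s)]
  ring

theorem PosDef.sub_smul_vecMulVec_add_smul_vecMulVec {B : Matrix ι ι ℝ} (hB : B.PosDef)
    {s γ : ι → ℝ} (hs : s ≠ 0) (hγs : 0 < γ ⬝ᵥ s) :
    (B - (s ⬝ᵥ B *ᵥ s)⁻¹ • vecMulVec (B *ᵥ s) (B *ᵥ s) + (γ ⬝ᵥ s)⁻¹ • vecMulVec γ γ).PosDef := by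
  have hσ : 0 < s ⬝ᵥ B *ᵥ s := by simpa using hB.dotProduct_mulVec_pos hs
  refine .of_dotProduct_mulVec_pos
    ((hB.1.sub ((isHermitian_vecMulVec_self _).smul (.all _))).add
      ((isHermitian_vecMulVec_self _).smul (.all _))) fun d hd => ?_
  set σ := s ⬝ᵥ B *ᵥ s
  set p := (B *ᵥ s) ⬝ᵥ d
  set w := d - (p / σ) • s with hw_def
  have hform : star d ⬝ᵥ (B - σ⁻¹ • vecMulVec (B *ᵥ s) (B *ᵥ s) + (γ ⬝ᵥ s)⁻¹ • vecMulVec γ γ) *ᵥ d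
      = w ⬝ᵥ B *ᵥ w + (γ ⬝ᵥ d) ^ 2 / (γ ⬝ᵥ s) := by
    rw [hw_def, hB.1.dotProduct_mulVec_sub_smul, star_trivial, add_mulVec, sub_mulVec,
      smul_mulVec, smul_mulVec, dotProduct_add, dotProduct_sub, dotProduct_smul, dotProduct_smul,
      dotProduct_vecMulVec_self_mulVec, dotProduct_vecMulVec_self_mulVec, smul_eq_mul, smul_eq_mul]
    field_simp
    ring
  rw [hform]
  by_cases hw : w = 0
  · have hd_eq : d = (p / σ) • s := sub_eq_zero.1 hw
    have hcoef : p / σ ≠ 0 := fun h => hd (by simpa [h] using hd_eq)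
    have hγd : γ ⬝ᵥ d ≠ 0 := by
      rw [hd_eq, dotProduct_smul, smul_eq_mul]
      exact mul_ne_zero hcoef hγs.ne'
    rw [hw, zero_dotProduct, zero_add]
    positivity
  · exact add_pos_of_pos_of_nonneg (by simpa using hB.dotProduct_mulVec_pos hw) (by positivity)

end Matrix

lemma EuclideanSpace.real_inner_eq_ofLp_dotProduct {ι : Type*} [Fintype ι]
    (x y : EuclideanSpace ℝ ι) : ⟪x, y⟫ = x.ofLp ⬝ᵥ y.ofLp := by
  rw [EuclideanSpace.inner_eq_star_dotProduct, star_trivial, dotProduct_comm]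

lemma bfgsUpdate_eq {n : ℕ} {B : Matrix (Fin n) (Fin n) ℝ} (hB : B.IsHermitian) (s γ : E n) :
    bfgsUpdate B s γ = B - (s.ofLp ⬝ᵥ B *ᵥ s.ofLp)⁻¹ • vecMulVec (B *ᵥ s.ofLp) (B *ᵥ s.ofLp)
      + (γ.ofLp ⬝ᵥ s.ofLp)⁻¹ • vecMulVec γ.ofLp γ.ofLp := by
  have hquad : quad B s = s.ofLp ⬝ᵥ B *ᵥ s.ofLp := by
    simp [quad, mulVec, dotProduct, Finset.mul_sum, mul_assoc]
  have hmid : B * outer s s * B = vecMulVec (B *ᵥ s.ofLp) (B *ᵥ s.ofLp) := by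
    change B * vecMulVec s.ofLp s.ofLp * B = _
    rw [mul_vecMulVec, vecMulVec_mul, ← mulVec_transpose,
      ← conjTranspose_eq_transpose_of_trivial, hB.eq]
  rw [bfgsUpdate, hquad, EuclideanSpace.real_inner_eq_ofLp_dotProduct, hmid, outer]
  rfl

theorem stmt8_general {n m : ℕ} (f : Fin m → E n → ℝ)
    (B : Matrix (Fin n) (Fin n) ℝ) (hB : B.PosDef)
    (x x' s : E n) (hs0 : s ≠ 0)
    (lam : Fin m → ℝ)
    (y : E n)
    (hdec : 0 < ∑ i, lam i * (f i x - f i x'))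
    (η : ℝ) (hη : η = ⟪y, s⟫ / ‖s‖ ^ 2)
    (mh : ℝ) (hmh : mh = max (-η) 0 + ∑ i, lam i * (f i x - f i x'))
    (γ : E n) (hγ : γ = y + mh • s) :
    (∑ i, lam i * (f i x - f i x')) * ‖s‖ ^ 2 ≤ ⟪γ, s⟫ ∧ 0 < ⟪γ, s⟫ ∧
      (bfgsUpdate B s γ).PosDef := by
  have hcurv : (∑ i, lam i * (f i x - f i x')) * ‖s‖ ^ 2 ≤ ⟪γ, s⟫ := by
    subst hγ hmh hη
    exact mul_norm_sq_le_inner_add_max_smul y s _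
  have hpos : 0 < ⟪γ, s⟫ := (mul_pos hdec (by positivity)).trans_le hcurv
  refine ⟨hcurv, hpos, ?_⟩
  rw [EuclideanSpace.real_inner_eq_ofLp_dotProduct] at hpos
  rw [bfgsUpdate_eq hB.1]
  exact hB.sub_smul_vecMulVec_add_smul_vecMulVec (by simpa using hs0) hpos

/-- positivity of γᵀs and positive definiteness of the BFGS-type update. -/
theorem stmt8 {n m : ℕ} [NeZero m] (f : Fin m → E n → ℝ)
    (hf : ∀ i, ContDiff ℝ 1 (f i))
    (B : Matrix (Fin n) (Fin n) ℝ) (hB : B.PosDef)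
    (x x' s : E n) (hs : s = x' - x) (hs0 : s ≠ 0)
    (lam : Fin m → ℝ) (hlam : lam ∈ stdSimplex ℝ (Fin m))
    (y : E n) (hy : y = ∑ i, lam i • (gradient (f i) x' - gradient (f i) x))
    (hdec : 0 < ∑ i, lam i * (f i x - f i x'))
    (η : ℝ) (hη : η = ⟪y, s⟫ / ‖s‖ ^ 2)
    (mh : ℝ) (hmh : mh = max (-η) 0 + ∑ i, lam i * (f i x - f i x'))
    (γ : E n) (hγ : γ = y + mh • s) :
    (∑ i, lam i * (f i x - f i x')) * ‖s‖ ^ 2 ≤ ⟪γ, s⟫ ∧ 0 < ⟪γ, s⟫ ∧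
      (bfgsUpdate B s γ).PosDef :=
  stmt8_general f B hB x x' s hs0 lam y hdec η hη mh hmh γ hγ
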